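/- Let xs < xt be integers, C ≥ 0 a real number, and f : ℤ → ℝ a function satisfying the Ameso(C) condition on [xs,xt]. Suppose there exist x', z_s, z_t ∈ [xs,xt] with z_s < x' < z_t such that f(z_s) − f(x') ≥ C and f(z_t) − f(x') ≥ C. Then min over y ∈ [z_s, z_t] of f(y) equals min over y ∈ [xs, xt] of f(y). -/

import Mathlib

/-!
If `f z + C ≤ f a` with `a < z`, then `f` does not drop below `f z` to the left of `a`.
Take `p` the leftmost maximiser of `f` on `[y, z)`; then `f (2p - y) ≤ f p`, and the
Ameso(C) inequality at the pair `y, 2p - y` with midpoint `p` gives `f z ≤ f y`. When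
`2p - y` lies beyond `z`, the pair `2p - z, z` with midpoint `p` forces `f (2p - z) ≥ f p`
at a point left of `p`, which is impossible. Applied on both sides of `x'` (the right side
by reflection), every value of `f` outside `[z_s, z_t]` is at least `f x'`.
-/

def mceil (x y : ℤ) : ℤ := ⌈((x : ℚ) + (y : ℚ)) / 2⌉

def mfloor (x y : ℤ) : ℤ := ⌊((x : ℚ) + (y : ℚ)) / 2⌋

theorem mceil_of_add_eq_two_mul {x y m : ℤ} (h : x + y = 2 * m) : mceil x y = m := by
  have hq : ((x : ℚ) + y) / 2 = m := by rw [← Int.cast_add, h]; push_cast; ring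
  rw [mceil, hq, Int.ceil_intCast]

theorem mfloor_of_add_eq_two_mul {x y m : ℤ} (h : x + y = 2 * m) : mfloor x y = m := by
  have hq : ((x : ℚ) + y) / 2 = m := by rw [← Int.cast_add, h]; push_cast; ring
  rw [mfloor, hq, Int.floor_intCast]

theorem mceil_sub_sub (s x y : ℤ) : mceil (s - x) (s - y) = s - mfloor x y := by
  have hq : ((s - x : ℤ) + (s - y : ℤ) : ℚ) / 2 = s + -(((x : ℚ) + y) / 2) := by push_cast; ring
  rw [mceil, mfloor, hq, Int.ceil_intCast_add, Int.ceil_neg, sub_eq_add_neg]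

theorem mfloor_sub_sub (s x y : ℤ) : mfloor (s - x) (s - y) = s - mceil x y := by
  have hq : ((s - x : ℤ) + (s - y : ℤ) : ℚ) / 2 = s + -(((x : ℚ) + y) / 2) := by push_cast; ring
  rw [mceil, mfloor, hq, Int.floor_intCast_add, Int.floor_neg, sub_eq_add_neg]

theorem Finset.exists_leftmost_max_image {α β : Type*} [LinearOrder α] [LinearOrder β]
    (s : Finset α) (f : α → β) (hs : s.Nonempty) :
    ∃ p ∈ s, (∀ x ∈ s, f x ≤ f p) ∧ ∀ x ∈ s, x < p → f x < f p := by
  obtain ⟨p, hp, hmax⟩ := s.exists_max_image (fun x => toLex (f x, OrderDual.toDual x)) hs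
  refine ⟨p, hp, fun x hx => ?_, fun x hx hxp => ?_⟩
  · rcases Prod.Lex.le_iff.1 (hmax x hx) with h | h
    exacts [h.le, h.1.le]
  · rcases Prod.Lex.le_iff.1 (hmax x hx) with h | h
    exacts [h, absurd h.2 (not_le.2 hxp)]

def AmesoOn (C : ℝ) (f : ℤ → ℝ) (xs xt : ℤ) : Prop :=
  ∀ x ∈ Finset.Icc xs xt, ∀ y ∈ Finset.Icc xs xt,
    f x + f y + C ≥ f (mceil x y) + f (mfloor x y)

namespace AmesoOn

variable {C : ℝ} {f : ℤ → ℝ} {xs xt : ℤ}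

theorem two_mul_le (hf : AmesoOn C f xs xt) {x y m : ℤ} (hx : x ∈ Finset.Icc xs xt)
    (hy : y ∈ Finset.Icc xs xt) (h : x + y = 2 * m) : 2 * f m ≤ f x + f y + C := by
  have := hf x hx y hy
  rw [mceil_of_add_eq_two_mul h, mfloor_of_add_eq_two_mul h] at this
  linarith

theorem nonneg (hf : AmesoOn C f xs xt) {x : ℤ} (hx : x ∈ Finset.Icc xs xt) : 0 ≤ C := by
  linarith [hf.two_mul_le hx hx (two_mul x).symm]

theorem comp_sub (hf : AmesoOn C f xs xt) (s : ℤ) :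
    AmesoOn C (fun v => f (s - v)) (s - xt) (s - xs) := by
  intro x hx y hy
  have mem : ∀ {v}, v ∈ Finset.Icc (s - xt) (s - xs) → s - v ∈ Finset.Icc xs xt := by
    intro v hv
    rw [Finset.mem_Icc] at hv ⊢
    omega
  have := hf _ (mem hx) _ (mem hy)
  rw [mceil_sub_sub, mfloor_sub_sub] at this
  linarith

theorem le_of_add_le_left (hf : AmesoOn C f xs xt) {y a z : ℤ} (hy : xs ≤ y) (hya : y ≤ a)
    (haz : a < z) (hz : z ≤ xt) (hgap : f z + C ≤ f a) : f z ≤ f y := by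
  have mem : ∀ {v}, y ≤ v → v ≤ z → v ∈ Finset.Icc xs xt := fun h₁ h₂ =>
    Finset.mem_Icc.2 ⟨hy.trans h₁, h₂.trans hz⟩
  obtain ⟨p, hp, hmax, hleft⟩ :=
    (Finset.Ico y z).exists_leftmost_max_image f ⟨a, Finset.mem_Ico.2 ⟨hya, haz⟩⟩
  rw [Finset.mem_Ico] at hp
  have hyz : y ≤ z := hya.trans haz.le
  have hzp : f z + C ≤ f p := hgap.trans (hmax a (Finset.mem_Ico.2 ⟨hya, haz⟩))
  by_cases hreflect : 2 * p - y ≤ z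
  · have hmax' : f (2 * p - y) ≤ f p := by
      rcases hreflect.lt_or_eq with hlt | heq
      · exact hmax _ (Finset.mem_Ico.2 ⟨by omega, hlt⟩)
      · rw [heq]
        linarith [hf.nonneg (mem hyz le_rfl)]
    have hpair := hf.two_mul_le (mem le_rfl hyz) (mem (by omega) hreflect)
      (show y + (2 * p - y) = 2 * p by ring)
    linarith
  · have hpair := hf.two_mul_le (mem (by omega) (by omega)) (mem hyz le_rfl)
      (show 2 * p - z + z = 2 * p by ring)
    have hleft' := hleft (2 * p - z) (Finset.mem_Ico.2 ⟨by omega, by omega⟩) (by omega)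
    linarith

theorem le_of_add_le_right (hf : AmesoOn C f xs xt) {y a z : ℤ} (hz : xs ≤ z) (hza : z < a)
    (hay : a ≤ y) (hy : y ≤ xt) (hgap : f z + C ≤ f a) : f z ≤ f y := by
  have := (hf.comp_sub (xs + xt)).le_of_add_le_left (y := xs + xt - y) (a := xs + xt - a)
    (z := xs + xt - z) (by omega) (by omega) (by omega) (by omega)
    (by simpa only [sub_sub_cancel] using hgap)
  simpa only [sub_sub_cancel] using this

end AmesoOn

/-- Corollary 4: if `z_s < x' < z_t` in `[xs, xt]` with `f(z_s) - f(x') ≥ C` and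
`f(z_t) - f(x') ≥ C`, then the minimum of `f` over `[z_s, z_t]` equals the minimum
over `[xs, xt]`. -/
theorem ameso_restrict_two_sided
    (xs xt : ℤ) (C : ℝ) (f : ℤ → ℝ)
    (hAmeso : ∀ x ∈ Finset.Icc xs xt, ∀ y ∈ Finset.Icc xs xt,
      f x + f y + C ≥ f (mceil x y) + f (mfloor x y))
    (x' zs zt : ℤ)
    (hzsl : xs ≤ zs) (hzsx' : zs < x') (hx'zt : x' < zt) (hztr : zt ≤ xt)
    (hgaps : f zs - f x' ≥ C) (hgapt : f zt - f x' ≥ C) :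
    (Finset.Icc zs zt).inf' (Finset.nonempty_Icc.2 (by omega)) f
      = (Finset.Icc xs xt).inf' (Finset.nonempty_Icc.2 (by omega)) f := by
  have hf : AmesoOn C f xs xt := hAmeso
  have hx' : x' ∈ Finset.Icc zs zt := Finset.mem_Icc.2 ⟨hzsx'.le, hx'zt.le⟩
  refine le_antisymm (Finset.le_inf' _ _ fun y hy => ?_)
    (Finset.inf'_mono f (Finset.Icc_subset_Icc hzsl hztr) _)
  rw [Finset.mem_Icc] at hy
  rcases le_or_gt y zs with hys | hzsy
  · exact (Finset.inf'_le f hx').trans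
      (hf.le_of_add_le_left hy.1 hys hzsx' (hx'zt.le.trans hztr) (by linarith))
  rcases le_or_gt y zt with hyt | hzty
  · exact Finset.inf'_le f (Finset.mem_Icc.2 ⟨hzsy.le, hyt⟩)
  · exact (Finset.inf'_le f hx').trans
      (hf.le_of_add_le_right (hzsl.trans hzsx'.le) hx'zt hzty.le hy.2 (by linarith))
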